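/- arXiv:1802.07559 — 2 statements merged into one kernel-verified Lean document; each statement's English description precedes it below -/
import Mathlib

section
/- Let p ≥ 1. If Z : K̄_o^n → ⟨convex bodies, +_p⟩ is an L_p-Minkowski valuation which is SL(n) covariant (respectively, SL(n) contravariant) and homogeneous of degree q on n-dimensional convex bodies, then Z is SL(n) covariant (respectively, SL(n) contravariant) and homogeneous of degree q on all of K̄_o^n. -/
open MeasureTheory Metric Set Filter Matrix
open scoped Pointwise ENNReal NNReal Topology RealInnerProductSpace

noncomputable section

abbrev En (n : ℕ) : Type := EuclideanSpace ℝ (Fin n)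

/-- The unit sphere `S^{n-1}` in `ℝ^n`. -/
def usphere (n : ℕ) : Set (En n) := Metric.sphere (0 : En n) 1

/-- A convex body: a nonempty compact convex subset of `ℝ^n`. -/
def IsCB {n : ℕ} (K : Set (En n)) : Prop :=
  K.Nonempty ∧ IsCompact K ∧ Convex ℝ K

/-- `K̄_o^n`: convex bodies containing the origin. -/
def Kob (n : ℕ) : Set (Set (En n)) := {K | IsCB K ∧ (0 : En n) ∈ K}

/-- `K_o^n`: `n`-dimensional convex bodies containing the origin. -/
def Ko (n : ℕ) : Set (Set (En n)) :=
  {K | IsCB K ∧ (0 : En n) ∈ K ∧ (interior K).Nonempty}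

/-- `K_c^n`: `n`-dimensional origin-symmetric convex bodies. -/
def Kc (n : ℕ) : Set (Set (En n)) :=
  {K | IsCB K ∧ (interior K).Nonempty ∧ ∀ x ∈ K, -x ∈ K}

/-- Support function `h_K`. -/
def suppFn {n : ℕ} (K : Set (En n)) (x : En n) : ℝ :=
  sSup ((fun y => ⟪x, y⟫) '' K)

/-- Radial function `ρ_K`. -/
def radialFn {n : ℕ} (K : Set (En n)) (u : En n) : ℝ :=
  sSup {r : ℝ | 0 ≤ r ∧ r • u ∈ K}

/-- Reverse spherical image of `K` at `ω`: boundary points of `K` having an outer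
unit normal belonging to `ω`. -/
def revImg {n : ℕ} (K ω : Set (En n)) : Set (En n) :=
  {x ∈ frontier K | ∃ u ∈ ω ∩ usphere n, ∀ y ∈ K, ⟪u, y⟫ ≤ ⟪u, x⟫}

/-- `S` is the classical surface-area-measure operator, characterized on
`n`-dimensional convex bodies by `S(K, ω) = H^{n-1}(τ(K, ω))`. -/
def IsSurfMeas {n : ℕ} (S : Set (En n) → Measure (En n)) : Prop :=
  ∀ K : Set (En n), IsCB K → (interior K).Nonempty →
    ∀ ω : Set (En n), MeasurableSet ω → S K ω = μH[(n : ℝ) - 1] (revImg K ω)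

/-- The `L_p`-surface area measure `S_p(K,·) = h_K^{1-p} S(K,·)`. -/
def lpSAM {n : ℕ} (p : ℝ) (S : Set (En n) → Measure (En n)) (K : Set (En n)) :
    Measure (En n) :=
  (S K).withDensity fun u => ENNReal.ofReal (suppFn K u ^ (1 - p))

/-- The volume-normalized `L_p`-surface area measure `S_p(K,·)/V(K)`. -/
def nlpSAM {n : ℕ} (p : ℝ) (S : Set (En n) → Measure (En n)) (K : Set (En n)) :
    Measure (En n) :=
  (volume K)⁻¹ • lpSAM p S K

/-- Spherical Lebesgue measure on `S^{n-1}`. -/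
def sphMeas (n : ℕ) : Measure (En n) := μH[(n : ℝ) - 1].restrict (usphere n)

/-- The action of a matrix on a subset of `ℝ^n`. -/
def matAct {n : ℕ} (A : Matrix (Fin n) (Fin n) ℝ) (K : Set (En n)) : Set (En n) :=
  (Matrix.toEuclideanLin A) '' K

/-- `SL(n)` covariance on a class `Q` of bodies. -/
def SLcov {n : ℕ} (Q : Set (Set (En n))) (Z : Set (En n) → Set (En n)) : Prop :=
  ∀ φ : Matrix.SpecialLinearGroup (Fin n) ℝ, ∀ K ∈ Q,
    Z (matAct (φ : Matrix (Fin n) (Fin n) ℝ) K) =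
      matAct (φ : Matrix (Fin n) (Fin n) ℝ) (Z K)

/-- `SL(n)` contravariance on a class `Q` of bodies. -/
def SLcontra {n : ℕ} (Q : Set (Set (En n))) (Z : Set (En n) → Set (En n)) : Prop :=
  ∀ φ : Matrix.SpecialLinearGroup (Fin n) ℝ, ∀ K ∈ Q,
    Z (matAct (φ : Matrix (Fin n) (Fin n) ℝ) K) =
      matAct (((φ : Matrix (Fin n) (Fin n) ℝ)ᵀ)⁻¹) (Z K)

/-- Homogeneity of degree `q` on a class `Q` of bodies. -/
def HomogDeg {n : ℕ} (Q : Set (Set (En n))) (Z : Set (En n) → Set (En n)) (q : ℝ) : Prop :=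
  ∀ K ∈ Q, ∀ lam : ℝ, 0 < lam → Z (lam • K) = lam ^ q • Z K

/-- Continuity (with respect to the Hausdorff metric) on a class `Q` of bodies. -/
def ContOnQ {n : ℕ} (Q : Set (Set (En n))) (Z : Set (En n) → Set (En n)) : Prop :=
  ∀ K ∈ Q, ∀ F : ℕ → Set (En n), (∀ i, F i ∈ Q) →
    Tendsto (fun i => hausdorffDist (F i) K) atTop (𝓝 0) →
    Tendsto (fun i => hausdorffDist (Z (F i)) (Z K)) atTop (𝓝 0)

/-- `Z : K_o^n → ⟨K_c^n, #̃_p⟩` is a normalized symmetric `L_p`-Blaschke valuation. -/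
def IsNormBlaschkeVal {n : ℕ} (p : ℝ) (S : Set (En n) → Measure (En n))
    (Z : Set (En n) → Set (En n)) : Prop :=
  (∀ K ∈ Ko n, Z K ∈ Kc n) ∧
  ∀ K L : Set (En n), K ∈ Ko n → L ∈ Ko n → K ∪ L ∈ Ko n → K ∩ L ∈ Ko n →
    nlpSAM p S (Z (K ∪ L)) + nlpSAM p S (Z (K ∩ L)) =
      nlpSAM p S (Z K) + nlpSAM p S (Z L)

/-- `Z : K_o^n → ⟨K_c^n, #_p⟩` is a symmetric `L_p`-Blaschke valuation. -/
def IsBlaschkeVal {n : ℕ} (p : ℝ) (S : Set (En n) → Measure (En n))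
    (Z : Set (En n) → Set (En n)) : Prop :=
  (∀ K ∈ Ko n, Z K ∈ Kc n) ∧
  ∀ K L : Set (En n), K ∈ Ko n → L ∈ Ko n → K ∪ L ∈ Ko n → K ∩ L ∈ Ko n →
    lpSAM p S (Z (K ∪ L)) + lpSAM p S (Z (K ∩ L)) =
      lpSAM p S (Z K) + lpSAM p S (Z L)

/-- The density `(1/2) ρ_K^{n+p} + (1/2) ρ_{-K}^{n+p}`. -/
def curvDens {n : ℕ} (p : ℝ) (K : Set (En n)) : En n → ℝ≥0∞ := fun u =>
  ENNReal.ofReal ((1 / 2) * radialFn K u ^ ((n : ℝ) + p)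
    + (1 / 2) * radialFn (-K) u ^ ((n : ℝ) + p))

/-- `Λ` is the normalized symmetric `L_p`-curvature image operator `Λ̃_c^p`. -/
def IsNormCurvImg {n : ℕ} (p : ℝ) (S : Set (En n) → Measure (En n))
    (Λ : Set (En n) → Set (En n)) : Prop :=
  ∀ K ∈ Ko n, Λ K ∈ Kc n ∧
    nlpSAM p S (Λ K) = (sphMeas n).withDensity (curvDens p K)

/-- `Λ` is the symmetric `L_p`-curvature image operator `Λ_c^p`. -/
def IsCurvImg {n : ℕ} (p : ℝ) (S : Set (En n) → Measure (En n))
    (Λ : Set (En n) → Set (En n)) : Prop :=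
  ∀ K ∈ Ko n, Λ K ∈ Kc n ∧
    lpSAM p S (Λ K) = (sphMeas n).withDensity (curvDens p K)

/-- The `L_p`-cosine transform of a measure. -/
def cosT {n : ℕ} (p : ℝ) (μ : Measure (En n)) (x : En n) : ℝ :=
  (∫⁻ v, ENNReal.ofReal (|⟪x, v⟫| ^ p) ∂μ).toReal

/-- `Z` is an `L_p`-Minkowski valuation on the class `Q`. -/
def IsLpMinkVal {n : ℕ} (p : ℝ) (Q : Set (Set (En n))) (Z : Set (En n) → Set (En n)) : Prop :=
  ∀ K L : Set (En n), K ∈ Q → L ∈ Q → K ∪ L ∈ Q → K ∩ L ∈ Q →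
    ∀ x : En n, suppFn (Z (K ∪ L)) x ^ p + suppFn (Z (K ∩ L)) x ^ p
      = suppFn (Z K) x ^ p + suppFn (Z L) x ^ p

/-- The rotation of `ℝ²` by the angle `π/2`. -/
def rotHalfPi : Matrix (Fin 2) (Fin 2) ℝ := !![0, -1; 1, 0]



namespace Stmt7Aux

variable {n : ℕ}

/-! ### Support function lemmas -/

theorem suppFn_nonneg {K : Set (En n)} (hK : IsCompact K) (h0 : (0:En n) ∈ K) (x : En n) :
    0 ≤ suppFn K x := by
  have hc : IsCompact ((fun y => ⟪x, y⟫) '' K) := hK.image (continuous_const.inner continuous_id)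
  have : (0:ℝ) ∈ (fun y => ⟪x, y⟫) '' K := ⟨0, h0, by simp⟩
  exact le_csSup hc.bddAbove this

theorem suppFn_image_linear (g : En n →ₗ[ℝ] En n) (M : Set (En n)) (x : En n) :
    suppFn (g '' M) x = suppFn M (LinearMap.adjoint g x) := by
  unfold suppFn
  rw [Set.image_image]
  congr 1
  ext y
  simp [LinearMap.adjoint_inner_left]

theorem subset_of_suppFn_le {A B : Set (En n)}
    (hA : IsCompact A) (hBne : B.Nonempty) (hBc : IsCompact B) (hBcv : Convex ℝ B)
    (h : ∀ x, suppFn A x ≤ suppFn B x) : A ⊆ B := by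
  intro a ha
  by_contra hab
  obtain ⟨f, u, hfb, hfa⟩ := geometric_hahn_banach_closed_point hBcv hBc.isClosed hab
  obtain ⟨v, hv⟩ := (InnerProductSpace.toDual ℝ (En n)).surjective f
  have hva : ⟪v, a⟫ = f a := by rw [← hv]; rfl
  have h1 : suppFn B v ≤ u := by
    apply csSup_le (hBne.image _)
    rintro r ⟨b, hb, rfl⟩
    have : ⟪v, b⟫ = f b := by rw [← hv]; rfl
    simpa [this] using (hfb b hb).le
  have h2 : ⟪v, a⟫ ≤ suppFn A v :=
    le_csSup (hA.image (continuous_const.inner continuous_id)).bddAbove ⟨a, ha, rfl⟩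
  have := (h v).trans h1
  rw [hva] at h2
  linarith [h2.trans this]

theorem eq_of_suppFn {A B : Set (En n)}
    (hAne : A.Nonempty) (hAc : IsCompact A) (hAcv : Convex ℝ A)
    (hBne : B.Nonempty) (hBc : IsCompact B) (hBcv : Convex ℝ B)
    (h : ∀ x, suppFn A x = suppFn B x) : A = B :=
  Set.Subset.antisymm
    (subset_of_suppFn_le hAc hBne hBc hBcv fun x => (h x).le)
    (subset_of_suppFn_le hBc hAne hAc hAcv fun x => (h x).ge)

/-! ### Cones over lower-dimensional bodies -/

def coneSet (v : En n) (K : Set (En n)) : Set (En n) :=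
  {x | ∃ k ∈ K, ∃ μ r : ℝ, 0 ≤ μ ∧ 0 ≤ r ∧ μ + r ≤ 1 ∧ x = μ • k + r • v}

variable {v : En n} {K : Set (En n)}

theorem zero_mem_coneSet (h0 : (0:En n) ∈ K) : (0:En n) ∈ coneSet v K :=
  ⟨0, h0, 0, 0, le_refl _, le_refl _, by norm_num, by simp⟩

theorem subset_coneSet : K ⊆ coneSet v K := fun k hk =>
  ⟨k, hk, 1, 0, zero_le_one, le_refl _, by norm_num, by simp⟩

theorem self_mem_coneSet (h0 : (0:En n) ∈ K) : v ∈ coneSet v K :=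
  ⟨0, h0, 0, 1, le_refl _, zero_le_one, by norm_num, by simp⟩

theorem convex_coneSet (hK : Convex ℝ K) : Convex ℝ (coneSet v K) := by
  rintro x ⟨k₁, hk₁, μ₁, r₁, hμ₁, hr₁, hs₁, rfl⟩ y ⟨k₂, hk₂, μ₂, r₂, hμ₂, hr₂, hs₂, rfl⟩
    a b ha hb hab
  set μ := a * μ₁ + b * μ₂ with hμdef
  have hμ : 0 ≤ μ := by positivity
  have hr : 0 ≤ a * r₁ + b * r₂ := by positivity
  have hsum : μ + (a * r₁ + b * r₂) ≤ 1 := by nlinarith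
  rcases eq_or_lt_of_le hμ with hμ0 | hμpos
  · refine ⟨k₁, hk₁, 0, a * r₁ + b * r₂, le_refl _, hr, by linarith, ?_⟩
    have h1 : a * μ₁ = 0 := by nlinarith
    have h2 : b * μ₂ = 0 := by nlinarith
    simp only [smul_add, smul_smul, zero_smul, zero_add]
    rw [h1, h2]
    module
  · refine ⟨(a * μ₁ / μ) • k₁ + (b * μ₂ / μ) • k₂, ?_, μ, a * r₁ + b * r₂, hμ, hr, hsum, ?_⟩
    · exact hK hk₁ hk₂ (by positivity) (by positivity)
        (by field_simp; exact hμdef.symm)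
    · have hμne : μ ≠ 0 := ne_of_gt hμpos
      simp only [smul_add, smul_smul]
      rw [mul_div_cancel₀ _ hμne, mul_div_cancel₀ _ hμne]
      module

theorem isCompact_coneSet (hK : IsCompact K) :
    IsCompact (coneSet v K) := by
  have hT : IsCompact {p : ℝ × ℝ | 0 ≤ p.1 ∧ 0 ≤ p.2 ∧ p.1 + p.2 ≤ 1} := by
    apply IsCompact.of_isClosed_subset (isCompact_Icc (a := ((0:ℝ),(0:ℝ))) (b := (1,1)))
    · exact (isClosed_le continuous_const continuous_fst).inter
        ((isClosed_le continuous_const continuous_snd).inter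
          (isClosed_le (continuous_fst.add continuous_snd) continuous_const))
    · rintro ⟨x, y⟩ ⟨hx, hy, hxy⟩
      constructor <;> constructor <;> simp_all <;> linarith
  have := (hK.prod hT).image
    (f := fun q : En n × (ℝ × ℝ) => q.2.1 • q.1 + q.2.2 • v)
    ((continuous_snd.fst.smul continuous_fst).add (continuous_snd.snd.smul continuous_const))
  convert this using 1
  ext x
  constructor
  · rintro ⟨k, hk, μ, r, hμ, hr, hs, rfl⟩
    exact ⟨(k, (μ, r)), ⟨hk, hμ, hr, hs⟩, rfl⟩
  · rintro ⟨⟨k, μ, r⟩, ⟨hk, hμ, hr, hs⟩, rfl⟩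
    exact ⟨k, hk, μ, r, hμ, hr, hs, rfl⟩

theorem comb_mem_coneSet (hK : Convex ℝ K) {k₁ k₂ : En n} (hk₁ : k₁ ∈ K) (hk₂ : k₂ ∈ K)
    {c₁ c₂ r : ℝ} (hc₁ : 0 ≤ c₁) (hc₂ : 0 ≤ c₂) (hr : 0 ≤ r) (hs : c₁ + c₂ + r ≤ 1)
    (w : En n) : c₁ • k₁ + c₂ • k₂ + r • w ∈ coneSet w K := by
  rcases eq_or_lt_of_le (by positivity : (0:ℝ) ≤ c₁ + c₂) with hμ0 | hμpos
  · have h1 : c₁ = 0 := by linarith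
    have h2 : c₂ = 0 := by linarith
    refine ⟨k₁, hk₁, 0, r, le_refl _, hr, by linarith, ?_⟩
    rw [h1, h2]; module
  · have hμne : c₁ + c₂ ≠ 0 := ne_of_gt hμpos
    refine ⟨(c₁ / (c₁ + c₂)) • k₁ + (c₂ / (c₁ + c₂)) • k₂,
      hK hk₁ hk₂ (by positivity) (by positivity) (by field_simp), c₁ + c₂, r,
      le_of_lt hμpos, hr, by linarith, ?_⟩
    simp only [smul_add, smul_smul]
    rw [mul_div_cancel₀ _ hμne, mul_div_cancel₀ _ hμne]

theorem mixed_mem (hK : Convex ℝ K) {x y : En n} (hx : x ∈ coneSet v K)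
    (hy : y ∈ coneSet (-v) K) {a b : ℝ} (ha : 0 ≤ a) (hb : 0 ≤ b) (hab : a + b = 1) :
    a • x + b • y ∈ coneSet v K ∪ coneSet (-v) K := by
  obtain ⟨k₁, hk₁, μ₁, r₁, hμ₁, hr₁, hs₁, rfl⟩ := hx
  obtain ⟨k₂, hk₂, μ₂, r₂, hμ₂, hr₂, hs₂, rfl⟩ := hy
  have hz : a • (μ₁ • k₁ + r₁ • v) + b • (μ₂ • k₂ + r₂ • (-v))
      = (a * μ₁) • k₁ + (b * μ₂) • k₂ + (a * r₁ - b * r₂) • v := by module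
  rw [hz]
  rcases le_or_gt 0 (a * r₁ - b * r₂) with hge | hlt
  · left
    exact comb_mem_coneSet hK hk₁ hk₂ (by positivity) (by positivity) hge (by nlinarith) v
  · right
    have : (a * μ₁) • k₁ + (b * μ₂) • k₂ + (a * r₁ - b * r₂) • v
        = (a * μ₁) • k₁ + (b * μ₂) • k₂ + (-(a * r₁ - b * r₂)) • (-v) := by module
    rw [this]
    exact comb_mem_coneSet hK hk₁ hk₂ (by positivity) (by positivity) (by linarith)
      (by nlinarith) (-v)

theorem convex_union_coneSet (hK : Convex ℝ K) :
    Convex ℝ (coneSet v K ∪ coneSet (-v) K) := by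
  rintro x (hx | hx) y (hy | hy) a b ha hb hab
  · exact Or.inl (convex_coneSet hK hx hy ha hb hab)
  · exact mixed_mem hK hx hy ha hb hab
  · have hy' : y ∈ coneSet (-(-v)) K := by rwa [neg_neg]
    have := mixed_mem (v := -v) hK hx hy' ha hb hab
    simpa [neg_neg, Set.union_comm] using this
  · exact Or.inr (convex_coneSet hK hx hy ha hb hab)

theorem coneSet_inter (hK : Convex ℝ K) (h0 : (0:En n) ∈ K)
    (hperp : ∀ k ∈ K, ⟪v, k⟫ = 0) (hv : v ≠ 0) :
    coneSet v K ∩ coneSet (-v) K = K := by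
  apply Set.Subset.antisymm
  · rintro x ⟨⟨k₁, hk₁, μ₁, r₁, hμ₁, hr₁, hs₁, h₁⟩, ⟨k₂, hk₂, μ₂, r₂, hμ₂, hr₂, hs₂, h₂⟩⟩
    have hvv : (0:ℝ) < ⟪v, v⟫ := by
      rw [real_inner_self_eq_norm_mul_norm]
      have : 0 < ‖v‖ := norm_pos_iff.mpr hv
      positivity
    have e₁ : ⟪v, x⟫ = r₁ * ⟪v, v⟫ := by
      rw [h₁, inner_add_right, real_inner_smul_right, real_inner_smul_right, hperp k₁ hk₁]
      ring
    have e₂ : ⟪v, x⟫ = -(r₂ * ⟪v, v⟫) := by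
      rw [h₂, inner_add_right, real_inner_smul_right, real_inner_smul_right, hperp k₂ hk₂,
        inner_neg_right]
      ring
    have hr10 : r₁ = 0 := by nlinarith
    have : x = μ₁ • k₁ + (1 - μ₁) • (0:En n) := by rw [h₁, hr10]; simp
    rw [this]
    exact hK hk₁ h0 hμ₁ (by linarith) (by ring)
  · exact Set.subset_inter subset_coneSet subset_coneSet

/-! ### Spans and interiors -/

theorem interior_nonempty_of_span {K : Set (En n)} (hcv : Convex ℝ K)
    (h0 : (0:En n) ∈ K) (hsp : Submodule.span ℝ K = ⊤) : (interior K).Nonempty := by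
  rw [hcv.interior_nonempty_iff_affineSpan_eq_top]
  rw [AffineSubspace.affineSpan_eq_top_iff_vectorSpan_eq_top_of_nonempty ℝ (En n) (En n) ⟨0, h0⟩]
  rw [vectorSpan_eq_span_vsub_set_right ℝ h0]
  simpa using hsp

theorem euclid_finrank (n : ℕ) : Module.finrank ℝ (En n) = n := by
  simp [finrank_euclideanSpace]

/-! ### Matrix equivalences -/

theorem toEuclideanLin_mul (A B : Matrix (Fin n) (Fin n) ℝ) :
    Matrix.toEuclideanLin (A * B) =
      (Matrix.toEuclideanLin A).comp (Matrix.toEuclideanLin B) := by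
  ext w
  simp [Matrix.toEuclideanLin_apply, Matrix.mulVec_mulVec]

def matEquiv (A : Matrix (Fin n) (Fin n) ℝ) (hA : IsUnit A.det) :
    En n ≃ₗ[ℝ] En n :=
  LinearEquiv.ofLinear (Matrix.toEuclideanLin A) (Matrix.toEuclideanLin A⁻¹)
    (by rw [← toEuclideanLin_mul, Matrix.mul_nonsing_inv A hA]
        ext w; simp [Matrix.toEuclideanLin_apply])
    (by rw [← toEuclideanLin_mul, Matrix.nonsing_inv_mul A hA]
        ext w; simp [Matrix.toEuclideanLin_apply])

theorem matEquiv_coe (A : Matrix (Fin n) (Fin n) ℝ) (hA : IsUnit A.det) :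
    ⇑(matEquiv A hA) = ⇑(Matrix.toEuclideanLin A) := rfl

theorem matAct_eq_image (A : Matrix (Fin n) (Fin n) ℝ) (hA : IsUnit A.det)
    (K : Set (En n)) : matAct A K = ⇑(matEquiv A hA) '' K := rfl

/-! ### Images of bodies under linear equivalences -/

theorem image_mem_Kob (f : En n ≃ₗ[ℝ] En n) {K : Set (En n)} (hK : K ∈ Kob n) :
    ⇑f '' K ∈ Kob n := by
  obtain ⟨⟨hne, hcomp, hconv⟩, h0⟩ := hK
  have hcont : Continuous ⇑f := f.toLinearMap.continuous_of_finiteDimensional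
  exact ⟨⟨hne.image _, hcomp.image hcont, hconv.linear_image f.toLinearMap⟩,
    ⟨0, h0, f.map_zero⟩⟩

/-! ### The key extension lemma -/

theorem key {p : ℝ} (hp : 1 ≤ p) (Z : Set (En n) → Set (En n))
    (hZr : ∀ K ∈ Kob n, Z K ∈ Kob n) (hval : IsLpMinkVal p (Kob n) Z)
    (f g : En n ≃ₗ[ℝ] En n)
    (H : ∀ K ∈ Ko n, Z (⇑f '' K) = ⇑g '' Z K) :
    ∀ K ∈ Kob n, Z (⇑f '' K) = ⇑g '' Z K := by
  have hpne : p ≠ 0 := by linarith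
  have hgcont : Continuous ⇑g := g.toLinearMap.continuous_of_finiteDimensional
  -- main induction on codimension
  have main : ∀ m : ℕ, ∀ K ∈ Kob n,
      n ≤ m + Module.finrank ℝ (Submodule.span ℝ K) → Z (⇑f '' K) = ⇑g '' Z K := by
    intro m
    induction m with
    | zero =>
      intro K hK hrank
      obtain ⟨⟨hne, hcomp, hconv⟩, h0⟩ := hK
      apply H
      refine ⟨⟨hne, hcomp, hconv⟩, h0, ?_⟩
      apply interior_nonempty_of_span hconv h0
      apply Submodule.eq_top_of_finrank_eq
      rw [euclid_finrank]
      have hle : Module.finrank ℝ (Submodule.span ℝ K) ≤ n := by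
        have := Submodule.finrank_le (Submodule.span ℝ K)
        rwa [euclid_finrank] at this
      omega
    | succ m ih =>
      intro K hK hrank
      by_cases hint : (interior K).Nonempty
      · exact H K ⟨hK.1, hK.2, hint⟩
      obtain ⟨⟨hne, hcomp, hconv⟩, h0⟩ := hK
      -- the span is a proper subspace
      have hspne : Submodule.span ℝ K ≠ ⊤ := by
        intro htop
        exact hint (interior_nonempty_of_span hconv h0 htop)
      obtain ⟨v, hvmem, hv⟩ :=
        Submodule.exists_mem_ne_zero_of_ne_bot
          ((Submodule.orthogonal_eq_bot_iff (K := (Submodule.span ℝ K))).ne.mpr hspne)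
      have hperp : ∀ k ∈ K, ⟪v, k⟫ = 0 := fun k hk => by
        rw [real_inner_comm]
        exact hvmem k (Submodule.subset_span hk)
      have hvnotin : v ∉ Submodule.span ℝ K := by
        intro hvin
        exact hv ((Submodule.mem_bot ℝ).mp
          ((Submodule.orthogonal_disjoint (Submodule.span ℝ K)).le_bot ⟨hvin, hvmem⟩))
      set L₁ := coneSet v K with hL₁def
      set L₂ := coneSet (-v) K with hL₂def
      -- memberships
      have hL₁ : L₁ ∈ Kob n :=
        ⟨⟨⟨0, zero_mem_coneSet h0⟩, isCompact_coneSet hcomp, convex_coneSet hconv⟩,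
          zero_mem_coneSet h0⟩
      have hL₂ : L₂ ∈ Kob n :=
        ⟨⟨⟨0, zero_mem_coneSet h0⟩, isCompact_coneSet hcomp, convex_coneSet hconv⟩,
          zero_mem_coneSet h0⟩
      have hU : L₁ ∪ L₂ ∈ Kob n :=
        ⟨⟨⟨0, Or.inl (zero_mem_coneSet h0)⟩, (isCompact_coneSet hcomp).union
          (isCompact_coneSet hcomp), convex_union_coneSet hconv⟩,
          Or.inl (zero_mem_coneSet h0)⟩
      have hI : L₁ ∩ L₂ = K := coneSet_inter hconv h0 hperp hv
      have hKmem : K ∈ Kob n := ⟨⟨hne, hcomp, hconv⟩, h0⟩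
      -- rank bounds
      have hrank₁ : n ≤ m + Module.finrank ℝ (Submodule.span ℝ L₁) := by
        have hlt : Submodule.span ℝ K < Submodule.span ℝ L₁ := by
          refine (Submodule.span_mono subset_coneSet).lt_of_ne fun h => hvnotin ?_
          rw [h]
          exact Submodule.subset_span (self_mem_coneSet h0)
        have := Submodule.finrank_lt_finrank_of_lt hlt
        omega
      have hrank₂ : n ≤ m + Module.finrank ℝ (Submodule.span ℝ L₂) := by
        have hlt : Submodule.span ℝ K < Submodule.span ℝ L₂ := by
          refine (Submodule.span_mono subset_coneSet).lt_of_ne fun h => hvnotin ?_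
          have : -v ∈ Submodule.span ℝ L₂ :=
            Submodule.subset_span (self_mem_coneSet h0)
          rw [h]
          simpa using (Submodule.span ℝ L₂).neg_mem this
        have := Submodule.finrank_lt_finrank_of_lt hlt
        omega
      have hrankU : n ≤ m + Module.finrank ℝ (Submodule.span ℝ (L₁ ∪ L₂)) := by
        have hlt : Submodule.span ℝ K < Submodule.span ℝ (L₁ ∪ L₂) := by
          refine (Submodule.span_mono (subset_coneSet.trans Set.subset_union_left)).lt_of_ne
            fun h => hvnotin ?_
          rw [h]
          exact Submodule.subset_span (Or.inl (self_mem_coneSet h0))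
        have := Submodule.finrank_lt_finrank_of_lt hlt
        omega
      -- apply induction hypothesis
      have ihL₁ := ih L₁ hL₁ hrank₁
      have ihL₂ := ih L₂ hL₂ hrank₂
      have ihU := ih (L₁ ∪ L₂) hU hrankU
      -- valuation identities
      have hIK : L₁ ∩ L₂ ∈ Kob n := by rw [hI]; exact hKmem
      have e₁ := hval L₁ L₂ hL₁ hL₂ hU hIK
      rw [hI] at e₁
      have hfL₁ : ⇑f '' L₁ ∈ Kob n := image_mem_Kob f hL₁
      have hfL₂ : ⇑f '' L₂ ∈ Kob n := image_mem_Kob f hL₂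
      have hfU : (⇑f '' L₁) ∪ (⇑f '' L₂) ∈ Kob n := by
        rw [← Set.image_union]; exact image_mem_Kob f hU
      have hfIeq : (⇑f '' L₁) ∩ (⇑f '' L₂) = ⇑f '' K := by
        rw [← Set.image_inter f.injective, hI]
      have hfI : (⇑f '' L₁) ∩ (⇑f '' L₂) ∈ Kob n := by
        rw [hfIeq]; exact image_mem_Kob f hKmem
      have e₂ := hval (⇑f '' L₁) (⇑f '' L₂) hfL₁ hfL₂ hfU hfI
      rw [hfIeq, ← Set.image_union] at e₂
      rw [ihL₁, ihL₂, ihU] at e₂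
      -- pointwise equality of support functions (after taking p-th powers)
      have hsupp : ∀ x, suppFn (Z (⇑f '' K)) x = suppFn (⇑g '' Z K) x := by
        intro x
        set y := LinearMap.adjoint g.toLinearMap x with hy
        have himg : ∀ M : Set (En n), suppFn (⇑g '' M) x = suppFn M y := by
          intro M
          have : ⇑g '' M = ⇑g.toLinearMap '' M := rfl
          rw [this, suppFn_image_linear]
        have e₂x := e₂ x
        rw [himg (Z (L₁ ∪ L₂)), himg (Z L₁), himg (Z L₂)] at e₂x
        have e₁y := e₁ y
        have hpow : suppFn (Z (⇑f '' K)) x ^ p = suppFn (⇑g '' Z K) x ^ p := by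
          rw [himg (Z K)]
          linarith
        have hZfK : Z (⇑f '' K) ∈ Kob n := hZr _ (image_mem_Kob f hKmem)
        have hZK : Z K ∈ Kob n := hZr _ hKmem
        have hn₁ : 0 ≤ suppFn (Z (⇑f '' K)) x := suppFn_nonneg hZfK.1.2.1 hZfK.2 x
        have hn₂ : 0 ≤ suppFn (⇑g '' Z K) x := by
          rw [himg (Z K)]
          exact suppFn_nonneg hZK.1.2.1 hZK.2 y
        exact Real.rpow_left_injOn hpne hn₁ hn₂ hpow
      -- conclude equality of the bodies
      have hZfK : Z (⇑f '' K) ∈ Kob n := hZr _ (image_mem_Kob f hKmem)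
      have hZK : Z K ∈ Kob n := hZr _ hKmem
      exact eq_of_suppFn hZfK.1.1 hZfK.1.2.1 hZfK.1.2.2
        (hZK.1.1.image _) (hZK.1.2.1.image hgcont) (hZK.1.2.2.linear_image g.toLinearMap)
        hsupp
  intro K hK
  exact main n K hK (by omega)

end Stmt7Aux

/-- **Lemma 4.2.** An `L_p`-Minkowski valuation on `K̄_o^n` which is `SL(n)` covariant
(resp. contravariant) and homogeneous of degree `q` on `n`-dimensional bodies is so on
all of `K̄_o^n`. -/
theorem stmt_7 {n : ℕ} (hn : 2 ≤ n) {p : ℝ} (hp : 1 ≤ p)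
    (Z : Set (En n) → Set (En n)) (hZr : ∀ K ∈ Kob n, Z K ∈ Kob n)
    (hval : IsLpMinkVal p (Kob n) Z) (q : ℝ) :
    ((SLcov (Ko n) Z ∧ HomogDeg (Ko n) Z q) → (SLcov (Kob n) Z ∧ HomogDeg (Kob n) Z q)) ∧
    ((SLcontra (Ko n) Z ∧ HomogDeg (Ko n) Z q) →
      (SLcontra (Kob n) Z ∧ HomogDeg (Kob n) Z q)) := by
  have hom : HomogDeg (Ko n) Z q → HomogDeg (Kob n) Z q := by
    intro hh K hK lam hlam
    have hlamne : lam ≠ 0 := ne_of_gt hlam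
    have hlq : lam ^ q ≠ 0 := (Real.rpow_pos_of_pos hlam q).ne'
    set f := LinearEquiv.smulOfNeZero ℝ (En n) lam hlamne with hfdef
    set g := LinearEquiv.smulOfNeZero ℝ (En n) (lam ^ q) hlq with hgdef
    have hf : ∀ M : Set (En n), ⇑f '' M = lam • M := by
      intro M; ext x; simp [hfdef, Set.mem_smul_set]
    have hg : ∀ M : Set (En n), ⇑g '' M = lam ^ q • M := by
      intro M; ext x; simp [hgdef, Set.mem_smul_set]
    have H : ∀ L ∈ Ko n, Z (⇑f '' L) = ⇑g '' Z L := by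
      intro L hLo; rw [hf, hg]; exact hh L hLo lam hlam
    have := Stmt7Aux.key hp Z hZr hval f g H K hK
    rwa [hf, hg] at this
  have cov : ∀ (A B : Matrix (Fin n) (Fin n) ℝ) (hA : IsUnit A.det) (hB : IsUnit B.det),
      (∀ K ∈ Ko n, Z (matAct A K) = matAct B (Z K)) →
      ∀ K ∈ Kob n, Z (matAct A K) = matAct B (Z K) := by
    intro A B hA hB hH K hK
    have H : ∀ L ∈ Ko n,
        Z (⇑(Stmt7Aux.matEquiv A hA) '' L) = ⇑(Stmt7Aux.matEquiv B hB) '' Z L := by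
      intro L hLo
      rw [← Stmt7Aux.matAct_eq_image A hA, ← Stmt7Aux.matAct_eq_image B hB]
      exact hH L hLo
    have := Stmt7Aux.key hp Z hZr hval _ _ H K hK
    rwa [← Stmt7Aux.matAct_eq_image A hA, ← Stmt7Aux.matAct_eq_image B hB] at this
  have hdet : ∀ φ : Matrix.SpecialLinearGroup (Fin n) ℝ,
      IsUnit (φ : Matrix (Fin n) (Fin n) ℝ).det := by
    intro φ
    rw [Matrix.SpecialLinearGroup.det_coe]; exact isUnit_one
  have hdetT : ∀ φ : Matrix.SpecialLinearGroup (Fin n) ℝ,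
      IsUnit (((φ : Matrix (Fin n) (Fin n) ℝ)ᵀ)⁻¹).det := by
    intro φ
    rw [Matrix.det_nonsing_inv, Matrix.det_transpose, Matrix.SpecialLinearGroup.det_coe]
    simp
  constructor
  · rintro ⟨hc, hh⟩
    refine ⟨?_, hom hh⟩
    intro φ K hK
    exact cov _ _ (hdet φ) (hdet φ) (fun L hLo => hc φ L hLo) K hK
  · rintro ⟨hc, hh⟩
    refine ⟨?_, hom hh⟩
    intro φ K hK
    exact cov _ _ (hdet φ) (hdetT φ) (fun L hLo => hc φ L hLo) K hK

end
end

section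
/- Let n ≥ 2, p > 1 and p ≠ n. If Z : K_o^n → ⟨K_c^n, #_p⟩ is a symmetric L_p-Blaschke valuation, then the map Z̃ : K_o^n → ⟨K_c^n, #̃_p⟩ defined by Z̃K = V(ZK)^{−1/p} ZK (equivalently, S_p(Z̃K,·)/V(Z̃K) = S_p(ZK,·)) is a normalized symmetric L_p-Blaschke valuation. Moreover, Z̃ is continuous if Z is continuous; Z̃ is SL(n) covariant (respectively, SL(n) contravariant) if Z is SL(n) covariant (respectively, SL(n) contravariant); and Z̃ is homogeneous of degree q(p − n)/p if Z is homogeneous of degree q. -/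
open MeasureTheory Metric Set Filter Matrix
open scoped Pointwise ENNReal NNReal Topology RealInnerProductSpace

noncomputable section

section Helpers
variable {n : ℕ}

lemma isCB_smul {K : Set (En n)} (hK : IsCB K) {c : ℝ} (hc : 0 < c) : IsCB (c • K) := by
  obtain ⟨hne, hcomp, hconv⟩ := hK
  refine ⟨hne.smul_set, ?_, hconv.smul c⟩
  rw [← Set.image_smul]
  exact hcomp.image (continuous_const_smul c)

lemma mem_Kc_smul {K : Set (En n)} (hK : K ∈ Kc n) {c : ℝ} (hc : 0 < c) : c • K ∈ Kc n := by
  obtain ⟨hcb, hint, hsym⟩ := hK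
  refine ⟨isCB_smul hcb hc, ?_, ?_⟩
  · rw [interior_smul₀ hc.ne']
    exact hint.smul_set
  · rintro x ⟨y, hy, rfl⟩
    exact ⟨-y, hsym y hy, by simp⟩

lemma Kc_neg_eq {K : Set (En n)} (hK : K ∈ Kc n) : -K = K := by
  obtain ⟨_, _, hsym⟩ := hK
  refine Set.Subset.antisymm (fun y hy => by simpa using hsym _ (Set.mem_neg.1 hy))
    (fun y hy => Set.mem_neg.2 (hsym y hy))

lemma Kc_zero_mem_interior {K : Set (En n)} (hK : K ∈ Kc n) : 0 ∈ interior K := by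
  obtain ⟨x, hx⟩ := hK.2.1
  have hxK : -x ∈ interior K := by
    have hneg : ∀ s : Set (En n), -s = (-1 : ℝ) • s := by
      intro s; ext y
      simp [Set.mem_smul_set_iff_inv_smul_mem₀ (by norm_num : (-1:ℝ) ≠ 0), Set.mem_neg]
    have h1 : -x ∈ -interior K := Set.neg_mem_neg.2 hx
    rw [hneg, ← interior_smul₀ (by norm_num : (-1:ℝ) ≠ 0), ← hneg, Kc_neg_eq hK] at h1
    exact h1
  have hco : Convex ℝ (interior K) := hK.1.2.2.interior
  have := hco hx hxK (by norm_num : (0:ℝ) ≤ 1/2) (by norm_num : (0:ℝ) ≤ 1/2) (by norm_num)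
  simpa using this

lemma Kc_zero_mem {K : Set (En n)} (hK : K ∈ Kc n) : 0 ∈ K :=
  interior_subset (Kc_zero_mem_interior hK)

lemma Kc_vol_pos {K : Set (En n)} (hK : K ∈ Kc n) : 0 < volume K := by
  obtain ⟨x, hx⟩ := hK.2.1
  obtain ⟨ε, hε, hball⟩ := Metric.isOpen_iff.1 isOpen_interior x hx
  calc (0:ℝ≥0∞) < volume (Metric.ball x ε) := Metric.measure_ball_pos _ _ hε
    _ ≤ volume K := measure_mono (hball.trans interior_subset)

lemma Kc_vol_ne_top {K : Set (En n)} (hK : K ∈ Kc n) : volume K ≠ ⊤ :=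
  hK.1.2.1.measure_lt_top.ne

end Helpers
section Helpers2
variable {n : ℕ}

lemma suppFn_bddAbove {K : Set (En n)} (hcomp : IsCompact K) (x : En n) :
    BddAbove ((fun y => ⟪x, y⟫) '' K) :=
  (hcomp.image (Continuous.inner continuous_const continuous_id)).bddAbove

lemma suppFn_nonneg {K : Set (En n)} (hcomp : IsCompact K) (h0 : 0 ∈ K) (x : En n) :
    0 ≤ suppFn K x :=
  le_csSup (suppFn_bddAbove hcomp x) ⟨0, h0, by simp⟩

lemma suppFn_smul {K : Set (En n)} {c : ℝ} (hc : 0 ≤ c) (x : En n) :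
    suppFn (c • K) x = c * suppFn K x := by
  unfold suppFn
  have himg : (fun y => ⟪x, y⟫) '' (c • K) = c • ((fun y => ⟪x, y⟫) '' K) := by
    ext z
    constructor
    · rintro ⟨y, ⟨y', hy', rfl⟩, rfl⟩
      exact ⟨⟪x, y'⟫, ⟨y', hy', rfl⟩, (real_inner_smul_right x y' c).symm⟩
    · rintro ⟨z', ⟨y', hy', rfl⟩, rfl⟩
      exact ⟨c • y', ⟨y', hy', rfl⟩, real_inner_smul_right x y' c⟩
  rw [himg, Real.sSup_smul_of_nonneg hc, smul_eq_mul]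

lemma revImg_smul {K ω : Set (En n)} {c : ℝ} (hc : 0 < c) :
    revImg (c • K) ω = c • revImg K ω := by
  have hfr : frontier (c • K) = c • frontier K := by
    rw [frontier, frontier, closure_smul₀' hc.ne', interior_smul₀ hc.ne',
      ← Set.smul_set_sdiff₀ hc.ne']
  ext x
  constructor
  · rintro ⟨hx, u, hu, hsup⟩
    rw [hfr] at hx
    obtain ⟨x', hx', rfl⟩ := hx
    refine ⟨x', ⟨hx', u, hu, fun y hy => ?_⟩, rfl⟩
    have h2 := hsup (c • y) (Set.smul_mem_smul_set hy)
    rw [real_inner_smul_right, real_inner_smul_right] at h2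
    exact le_of_mul_le_mul_left h2 hc
  · rintro ⟨x', ⟨hx', u, hu, hsup⟩, rfl⟩
    refine ⟨hfr ▸ Set.smul_mem_smul_set hx', u, hu, ?_⟩
    rintro y ⟨y', hy', rfl⟩
    rw [real_inner_smul_right, real_inner_smul_right]
    exact mul_le_mul_of_nonneg_left (hsup y' hy') hc.le

lemma S_smul {S : Set (En n) → Measure (En n)} (hS : IsSurfMeas S) {K : Set (En n)}
    (hK : IsCB K) (hint : (interior K).Nonempty) {c : ℝ} (hc : 0 < c) (hd : 0 ≤ (n:ℝ) - 1) :
    S (c • K) = (ENNReal.ofReal c) ^ ((n:ℝ) - 1) • S K := by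
  have h1 := isCB_smul hK hc
  have h2 : (interior (c • K)).Nonempty := by
    rw [interior_smul₀ hc.ne']; exact hint.smul_set
  ext ω hω
  rw [Measure.smul_apply, hS _ h1 h2 ω hω, hS _ hK hint ω hω, revImg_smul hc,
    Measure.hausdorffMeasure_smul₀ hd hc.ne']
  simp only [ENNReal.smul_def, smul_eq_mul]
  congr 1
  rw [ENNReal.coe_rpow_of_nonneg _ hd, Real.nnnorm_of_nonneg hc.le]
  congr 1
  simp [ENNReal.ofReal]
  ext
  simp [Real.coe_toNNReal _ hc.le]

lemma vol_smul {K : Set (En n)} {c : ℝ} (hc : 0 ≤ c) :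
    volume (c • K) = (ENNReal.ofReal c) ^ (n : ℕ) * volume K := by
  rw [Measure.addHaar_smul, abs_of_nonneg (by positivity : (0:ℝ) ≤ c ^ Module.finrank ℝ (En n)),
    ENNReal.ofReal_pow hc]
  congr 2
  simp

end Helpers2
section Helpers3
variable {n : ℕ}

lemma lpSAM_smul {p : ℝ} {S : Set (En n) → Measure (En n)} (hS : IsSurfMeas S)
    {K : Set (En n)} (hK : K ∈ Kc n) {c : ℝ} (hc : 0 < c) (hd : 0 ≤ (n:ℝ) - 1) :
    lpSAM p S (c • K) = (ENNReal.ofReal c) ^ ((n:ℝ) - p) • lpSAM p S K := by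
  have hcb := hK.1
  have hint := hK.2.1
  ext s hs
  rw [Measure.smul_apply, lpSAM, lpSAM, withDensity_apply _ hs, withDensity_apply _ hs,
    S_smul hS hcb hint hc hd, Measure.restrict_smul, lintegral_smul_measure]
  have hpt : ∀ u, ENNReal.ofReal (suppFn (c • K) u ^ (1 - p)) =
      ENNReal.ofReal (c ^ (1 - p)) * ENNReal.ofReal (suppFn K u ^ (1 - p)) := by
    intro u
    rw [suppFn_smul hc.le, Real.mul_rpow hc.le (suppFn_nonneg hcb.2.1 (Kc_zero_mem hK) u),
      ENNReal.ofReal_mul (by positivity)]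
  simp_rw [hpt]
  rw [lintegral_const_mul' _ _ ENNReal.ofReal_ne_top, smul_eq_mul, smul_eq_mul, ← mul_assoc]
  congr 1
  rw [← ENNReal.ofReal_rpow_of_pos hc,
    ← ENNReal.rpow_add _ _ (by simp [hc] : ENNReal.ofReal c ≠ 0) ENNReal.ofReal_ne_top]

  congr 1
  ring

lemma nlpSAM_norm {p : ℝ} (hp0 : p ≠ 0) {S : Set (En n) → Measure (En n)} (hS : IsSurfMeas S)
    {K : Set (En n)} (hK : K ∈ Kc n) (hd : 0 ≤ (n:ℝ) - 1) :
    nlpSAM p S (((volume K).toReal ^ (-(1/p))) • K) = lpSAM p S K := by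
  set V := volume K with hVdef
  have hV0 : V ≠ 0 := (Kc_vol_pos hK).ne'
  have hVt : V ≠ ⊤ := Kc_vol_ne_top hK
  have hT : 0 < V.toReal := ENNReal.toReal_pos hV0 hVt
  set c : ℝ := V.toReal ^ (-(1/p)) with hcdef
  have hc : 0 < c := Real.rpow_pos_of_pos hT _
  have ha0 : ENNReal.ofReal c ≠ 0 := by simp [hc]
  have hat : ENNReal.ofReal c ≠ ⊤ := ENNReal.ofReal_ne_top
  have hkey : ENNReal.ofReal c ^ (p : ℝ) = V⁻¹ := by
    rw [ENNReal.ofReal_rpow_of_pos hc, hcdef, ← Real.rpow_mul hT.le]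
    have : -(1/p) * p = -1 := by field_simp
    rw [this, Real.rpow_neg_one, ENNReal.ofReal_inv_of_pos hT,
      ENNReal.ofReal_toReal hVt]
  rw [nlpSAM, lpSAM_smul hS hK hc hd, vol_smul hc.le]
  have hAn0 : (ENNReal.ofReal c) ^ (n:ℕ) ≠ 0 := pow_ne_zero _ ha0
  have hAnt : (ENNReal.ofReal c) ^ (n:ℕ) ≠ ⊤ := ENNReal.pow_ne_top hat
  rw [smul_smul]
  have hone : ((ENNReal.ofReal c) ^ (n:ℕ) * V)⁻¹ * (ENNReal.ofReal c) ^ ((n:ℝ) - p) = 1 := by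
    rw [ENNReal.mul_inv (Or.inl hAn0) (Or.inl hAnt), ← ENNReal.rpow_natCast,
      ← ENNReal.rpow_neg, mul_comm ((ENNReal.ofReal c) ^ (-(n:ℝ))) V⁻¹, mul_assoc,
      ← ENNReal.rpow_add _ _ ha0 hat]
    have h2 : -(n:ℝ) + ((n:ℝ) - p) = -p := by ring
    rw [h2, ENNReal.rpow_neg, hkey, inv_inv, ENNReal.inv_mul_cancel hV0 hVt]
  rw [hone, one_smul]

end Helpers3
section Helpers4
variable {n : ℕ}

lemma Kc_exists_ball {K : Set (En n)} (hK : K ∈ Kc n) :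
    ∃ r : ℝ, 0 < r ∧ Metric.closedBall 0 r ⊆ K := by
  have h0 := Kc_zero_mem_interior hK
  obtain ⟨ε, hε, hball⟩ := Metric.isOpen_iff.1 isOpen_interior 0 h0
  exact ⟨ε/2, by positivity, (Metric.closedBall_subset_ball (by linarith)).trans
    (hball.trans interior_subset)⟩

lemma edist_fin {A B : Set (En n)} (hA : IsCompact A) (hB : IsCompact B)
    (hAne : A.Nonempty) (hBne : B.Nonempty) : EMetric.hausdorffEdist A B ≠ ⊤ :=
  Metric.hausdorffEdist_ne_top_of_nonempty_of_bounded hAne hBne hA.isBounded hB.isBounded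

lemma subset_smul_of_hdist_lt {K L : Set (En n)} (hK : K ∈ Kc n) (hL : L ∈ Kc n)
    {r δ : ℝ} (hr : 0 < r) (hball : Metric.closedBall 0 r ⊆ K) (hδ : 0 < δ)
    (hdist : hausdorffDist L K < δ) : L ⊆ (1 + δ/r) • K := by
  intro x hx
  obtain ⟨y, hy, hxy⟩ := exists_dist_lt_of_hausdorffDist_lt hx hdist
    (edist_fin hL.1.2.1 hK.1.2.1 hL.1.1 hK.1.1)
  set t : ℝ := δ / r with ht
  have ht0 : 0 < t := by positivity
  have hw : t⁻¹ • (x - y) ∈ K := by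
    apply hball
    rw [Metric.mem_closedBall, dist_zero_right, norm_smul, norm_inv, Real.norm_eq_abs,
      abs_of_pos ht0]
    rw [← dist_eq_norm]
    have : t⁻¹ * dist x y ≤ t⁻¹ * δ := by
      apply mul_le_mul_of_nonneg_left hxy.le (by positivity)
    calc t⁻¹ * dist x y ≤ t⁻¹ * δ := this
      _ = r := by rw [ht, inv_div, div_mul_cancel₀ _ hδ.ne']
  have hz : (1/(1+t)) • y + (t/(1+t)) • (t⁻¹ • (x - y)) ∈ K := by
    apply hK.1.2.2 hy hw (by positivity) (by positivity)
    field_simp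
  refine ⟨_, hz, ?_⟩
  have h1t : (1:ℝ) + t ≠ 0 := by positivity
  show (1 + t) • ((1/(1+t)) • y + (t/(1+t)) • t⁻¹ • (x - y)) = x
  rw [smul_add, smul_smul, smul_smul, smul_smul]
  have hs1 : (1 + t) * (1/(1+t)) = 1 := by field_simp
  have hs2 : (1 + t) * (t/(1+t)) * t⁻¹ = 1 := by field_simp
  rw [hs1, hs2, one_smul, one_smul]
  abel

lemma smul_subset_of_hdist_lt {K L : Set (En n)} (hK : K ∈ Kc n) (hL : L ∈ Kc n)
    {r δ : ℝ} (hr : 0 < r) (hball : Metric.closedBall 0 r ⊆ K) (hδ : 0 < δ) (hδr : δ ≤ r)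
    (hdist : hausdorffDist K L < δ) : (1 - δ/r) • K ⊆ L := by
  rintro x ⟨k, hk, rfl⟩
  set t : ℝ := δ / r with ht
  have ht0 : 0 < t := by positivity
  have ht1 : t ≤ 1 := by rw [ht, div_le_one hr]; exact hδr
  by_contra hxL
  obtain ⟨f, u, hfu, hux⟩ := geometric_hahn_banach_closed_point hL.1.2.2
    hL.1.2.1.isClosed hxL
  have h0u : 0 < u := by have := hfu 0 (Kc_zero_mem hL); simpa using this
  obtain ⟨k₀, hk₀K, hk₀max'⟩ := hK.1.2.1.exists_isMaxOn hK.1.1 f.continuous.continuousOn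
  have hk₀max : ∀ y ∈ K, f y ≤ f k₀ := fun y hy => hk₀max' hy
  set M : ℝ := f k₀ with hM
  have hM0 : 0 ≤ M := by
    have := hk₀max 0 (Kc_zero_mem hK); simpa using this
  have hMu : M < u + ‖f‖ * δ := by
    obtain ⟨l, hl, hdl⟩ := exists_dist_lt_of_hausdorffDist_lt hk₀K hdist
      (edist_fin hK.1.2.1 hL.1.2.1 hK.1.1 hL.1.1)
    have h1 : f k₀ = f l + f (k₀ - l) := by rw [map_sub]; ring
    have h2 : f (k₀ - l) ≤ ‖f‖ * ‖k₀ - l‖ :=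
      (le_abs_self _).trans (f.le_opNorm _)
    have h3 : ‖f‖ * ‖k₀ - l‖ ≤ ‖f‖ * δ := by
      apply mul_le_mul_of_nonneg_left _ (norm_nonneg f)
      rw [← dist_eq_norm]; exact hdl.le
    have h4 := hfu l hl
    calc M = f l + f (k₀ - l) := h1
      _ < u + ‖f‖ * δ := by linarith
  have hrf : r * ‖f‖ ≤ M := by
    have hfb : ‖f‖ ≤ M / r := by
      apply f.opNorm_le_bound (by positivity)
      intro z
      rcases eq_or_ne z 0 with rfl | hz
      · simp
      · have hnz : (0:ℝ) < ‖z‖ := norm_pos_iff.2 hz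
        have hmem : ∀ s : ℝ, |s| = r / ‖z‖ → (s • z) ∈ K := by
          intro s hs
          apply hball
          rw [Metric.mem_closedBall, dist_zero_right, norm_smul, Real.norm_eq_abs, hs]
          rw [div_mul_cancel₀ _ hnz.ne']
        have habs : |r / ‖z‖| = r / ‖z‖ := abs_of_pos (by positivity)
        have habs' : |-(r / ‖z‖)| = r / ‖z‖ := by rw [abs_neg]; exact habs
        have h1 : (r/‖z‖) * f z ≤ M := by
          have := hk₀max _ (hmem _ habs)
          rwa [_root_.map_smul, smul_eq_mul] at this
        have h2 : -((r/‖z‖) * f z) ≤ M := by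
          have := hk₀max _ (hmem _ habs')
          rwa [_root_.map_smul, smul_eq_mul, neg_mul] at this
        have h1' : r * f z ≤ M * ‖z‖ := by
          rw [div_mul_eq_mul_div] at h1
          exact (div_le_iff₀ hnz).1 h1
        have h2' : r * -(f z) ≤ M * ‖z‖ := by
          have h2a : (r/‖z‖) * -(f z) ≤ M := by linarith
          rw [div_mul_eq_mul_div] at h2a
          exact (div_le_iff₀ hnz).1 h2a
        rw [Real.norm_eq_abs, abs_le]
        constructor
        · rw [neg_le, div_mul_eq_mul_div, le_div_iff₀ hr]
          nlinarith [h2']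
        · rw [div_mul_eq_mul_div, le_div_iff₀ hr]
          nlinarith [h1']
    calc r * ‖f‖ ≤ r * (M / r) := mul_le_mul_of_nonneg_left hfb hr.le
      _ = M := by field_simp
  have hfx : f ((1 - t) • k) = (1 - t) * f k := by rw [_root_.map_smul, smul_eq_mul]
  rw [hfx] at hux
  have hfkM : f k ≤ M := hk₀max k hk
  have hδf : ‖f‖ * δ ≤ t * M := by
    have : δ = t * r := by rw [ht]; field_simp
    rw [this, ← mul_assoc, mul_comm ‖f‖ t, mul_assoc]
    exact mul_le_mul_of_nonneg_left (by linarith [hrf]) ht0.le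
  rcases le_or_gt (f k) 0 with hfk | hfk
  · nlinarith
  · nlinarith
end Helpers4
section Helpers5
variable {n : ℕ}

lemma hdist_smul_le {A B : Set (En n)} (hA : IsCompact A) (hB : IsCompact B)
    (hAne : A.Nonempty) (hBne : B.Nonempty) {c : ℝ} (hc : 0 ≤ c) :
    hausdorffDist (c • A) (c • B) ≤ c * hausdorffDist A B := by
  have hfin := edist_fin hA hB hAne hBne
  apply hausdorffDist_le_of_mem_dist
    (mul_nonneg hc hausdorffDist_nonneg)
  · rintro x ⟨x', hx', rfl⟩
    obtain ⟨y', hy', hd⟩ := hB.exists_infDist_eq_dist hBne x'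
    refine ⟨c • y', Set.smul_mem_smul_set hy', ?_⟩
    rw [dist_smul₀, Real.norm_eq_abs, abs_of_nonneg hc, ← hd]
    exact mul_le_mul_of_nonneg_left (infDist_le_hausdorffDist_of_mem hx' hfin) hc
  · rintro x ⟨x', hx', rfl⟩
    obtain ⟨y', hy', hd⟩ := hA.exists_infDist_eq_dist hAne x'
    refine ⟨c • y', Set.smul_mem_smul_set hy', ?_⟩
    rw [dist_smul₀, Real.norm_eq_abs, abs_of_nonneg hc, ← hd]
    refine mul_le_mul_of_nonneg_left ?_ hc
    rw [hausdorffDist_comm]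
    exact infDist_le_hausdorffDist_of_mem hx' (edist_fin hB hA hBne hAne)

lemma hdist_smul_pair {A : Set (En n)} {a b R : ℝ} (hR : ∀ x ∈ A, ‖x‖ ≤ R)
    (hAne : A.Nonempty) : hausdorffDist (a • A) (b • A) ≤ |a - b| * R := by
  obtain ⟨x₀, hx₀⟩ := hAne
  have hR0 : 0 ≤ R := le_trans (norm_nonneg _) (hR _ hx₀)
  apply hausdorffDist_le_of_mem_dist (by positivity)
  · rintro x ⟨x', hx', rfl⟩
    refine ⟨b • x', Set.smul_mem_smul_set hx', ?_⟩
    rw [dist_eq_norm, ← sub_smul, norm_smul, Real.norm_eq_abs]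
    exact mul_le_mul_of_nonneg_left (hR _ hx') (abs_nonneg _)
  · rintro x ⟨x', hx', rfl⟩
    refine ⟨a • x', Set.smul_mem_smul_set hx', ?_⟩
    rw [dist_eq_norm, ← sub_smul, norm_smul, Real.norm_eq_abs, abs_sub_comm]
    exact mul_le_mul_of_nonneg_left (hR _ hx') (abs_nonneg _)

lemma vol_tendsto {K' : Set (En n)} (hK' : K' ∈ Kc n) (L : ℕ → Set (En n))
    (hL : ∀ i, L i ∈ Kc n) (hd : Tendsto (fun i => hausdorffDist (L i) K') atTop (𝓝 0)) :
    Tendsto (fun i => (volume (L i)).toReal) atTop (𝓝 ((volume K').toReal)) := by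
  obtain ⟨r, hr, hball⟩ := Kc_exists_ball hK'
  set D := fun i => hausdorffDist (L i) K' with hD
  set δ := fun i => D i + 1/((i:ℝ)+1) with hδdef
  have hDnn : ∀ i, 0 ≤ D i := fun i => hausdorffDist_nonneg
  have hδpos : ∀ i, 0 < δ i := fun i => by
    have h1 := hDnn i
    have h2 : (0:ℝ) < 1/((i:ℝ)+1) := by positivity
    simp only [hδdef]; linarith
  have hδ0 : Tendsto δ atTop (𝓝 0) := by
    have h2 : Tendsto (fun i : ℕ => 1/((i:ℝ)+1)) atTop (𝓝 0) :=
      tendsto_one_div_add_atTop_nhds_zero_nat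
    have h3 := hd.add h2
    rw [add_zero] at h3
    exact h3
  set VT := (volume K').toReal with hVT
  have hKtop := Kc_vol_ne_top hK'
  have hbnd : ∀ᶠ i in atTop, (1 - δ i / r)^n * VT ≤ (volume (L i)).toReal ∧
      (volume (L i)).toReal ≤ (1 + δ i / r)^n * VT := by
    filter_upwards [hδ0.eventually (gt_mem_nhds hr)] with i hir
    have hlt : hausdorffDist (L i) K' < δ i := by
      have h1 := hDnn i
      have h2 : (0:ℝ) < 1/((i:ℝ)+1) := by positivity
      show D i < δ i
      simp only [hδdef]; linarith
    constructor
    · have hsub := smul_subset_of_hdist_lt hK' (hL i) hr hball (hδpos i) hir.le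
        (by rwa [hausdorffDist_comm])
      have hv := measure_mono (μ := (volume : Measure (En n))) hsub
      have hc1 : (0:ℝ) ≤ 1 - δ i / r := by
        have : δ i / r ≤ 1 := (div_le_one hr).2 hir.le
        linarith
      rw [vol_smul hc1] at hv
      have := ENNReal.toReal_mono (Kc_vol_ne_top (hL i)) hv
      rw [ENNReal.toReal_mul, ENNReal.toReal_pow, ENNReal.toReal_ofReal hc1] at this
      exact this
    · have hsub := subset_smul_of_hdist_lt hK' (hL i) hr hball (hδpos i) hlt
      have hv := measure_mono (μ := (volume : Measure (En n))) hsub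
      have hc1 : (0:ℝ) ≤ 1 + δ i / r := by
        have h3 : 0 ≤ δ i / r := div_nonneg (hδpos i).le hr.le
        linarith
      rw [vol_smul hc1] at hv
      have hne : ENNReal.ofReal (1 + δ i / r) ^ n * volume K' ≠ ⊤ :=
        ENNReal.mul_ne_top (ENNReal.pow_ne_top ENNReal.ofReal_ne_top) hKtop
      have := ENNReal.toReal_mono hne hv
      rw [ENNReal.toReal_mul, ENNReal.toReal_pow, ENNReal.toReal_ofReal hc1] at this
      exact this
  have hlow : Tendsto (fun i => (1 - δ i / r)^n * VT) atTop (𝓝 VT) := by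
    have h1 : Tendsto (fun i => 1 - δ i / r) atTop (𝓝 1) := by
      have := hδ0.div_const r
      simpa using (tendsto_const_nhds (x := (1:ℝ))).sub this
    have := (h1.pow n).mul_const VT
    simpa using this
  have hup : Tendsto (fun i => (1 + δ i / r)^n * VT) atTop (𝓝 VT) := by
    have h1 : Tendsto (fun i => 1 + δ i / r) atTop (𝓝 1) := by
      have := hδ0.div_const r
      simpa using (tendsto_const_nhds (x := (1:ℝ))).add this
    have := (h1.pow n).mul_const VT
    simpa using this
  exact tendsto_of_tendsto_of_tendsto_of_le_of_le' hlow hup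
    (hbnd.mono fun i h => h.1) (hbnd.mono fun i h => h.2)

lemma det_toEuclideanLin (A : Matrix (Fin n) (Fin n) ℝ) :
    LinearMap.det (Matrix.toEuclideanLin A) = A.det := by
  rw [Matrix.toEuclideanLin_eq_toLin]
  exact LinearMap.det_toLin _ _

lemma vol_matAct {A : Matrix (Fin n) (Fin n) ℝ} (hA : |A.det| = 1) (s : Set (En n)) :
    volume (matAct A s) = volume s := by
  rw [matAct, Measure.addHaar_image_linearMap, det_toEuclideanLin, hA]
  simp

lemma matAct_smul (A : Matrix (Fin n) (Fin n) ℝ) (c : ℝ) (s : Set (En n)) :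
    matAct A (c • s) = c • matAct A s := by
  unfold matAct
  ext y
  constructor
  · rintro ⟨x, ⟨x', hx', rfl⟩, rfl⟩
    exact ⟨Matrix.toEuclideanLin A x', ⟨x', hx', rfl⟩, (_root_.map_smul _ _ _).symm⟩
  · rintro ⟨z, ⟨x', hx', rfl⟩, rfl⟩
    exact ⟨c • x', ⟨x', hx', rfl⟩, _root_.map_smul _ _ _⟩

end Helpers5

/-- **Lemma 5.1.** If `Z` is a symmetric `L_p`-Blaschke valuation (`p ≠ n`), then
`Z̃K = V(ZK)^{-1/p} ZK` is a normalized symmetric `L_p`-Blaschke valuation, which is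
continuous / `SL(n)` covariant / `SL(n)` contravariant / homogeneous of degree
`q(p-n)/p` whenever `Z` is continuous / covariant / contravariant / homogeneous of
degree `q`. -/
theorem stmt_15 {n : ℕ} (hn : 2 ≤ n) {p : ℝ} (hp : 1 < p) (hpn : p ≠ (n : ℝ))
    (S : Set (En n) → Measure (En n)) (hS : IsSurfMeas S)
    (Z : Set (En n) → Set (En n)) (hZ : IsBlaschkeVal p S Z) :
    IsNormBlaschkeVal p S (fun K => ((volume (Z K)).toReal ^ (-(1 / p))) • Z K) ∧
    (ContOnQ (Ko n) Z →
      ContOnQ (Ko n) (fun K => ((volume (Z K)).toReal ^ (-(1 / p))) • Z K)) ∧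
    (SLcov (Ko n) Z →
      SLcov (Ko n) (fun K => ((volume (Z K)).toReal ^ (-(1 / p))) • Z K)) ∧
    (SLcontra (Ko n) Z →
      SLcontra (Ko n) (fun K => ((volume (Z K)).toReal ^ (-(1 / p))) • Z K)) ∧
    (∀ q : ℝ, HomogDeg (Ko n) Z q →
      HomogDeg (Ko n) (fun K => ((volume (Z K)).toReal ^ (-(1 / p))) • Z K)
        (q * (p - (n : ℝ)) / p)) := by
  have hp0 : p ≠ 0 := by linarith
  have hd : (0:ℝ) ≤ (n:ℝ) - 1 := by
    have h2 : (2:ℝ) ≤ (n:ℝ) := by exact_mod_cast hn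
    linarith
  have hZK : ∀ K ∈ Ko n, Z K ∈ Kc n := hZ.1
  have hcpos : ∀ K : Set (En n), Z K ∈ Kc n → 0 < (volume (Z K)).toReal ^ (-(1/p)) :=
    fun K h => Real.rpow_pos_of_pos (ENNReal.toReal_pos (Kc_vol_pos h).ne' (Kc_vol_ne_top h)) _
  refine ⟨⟨?_, ?_⟩, ?_, ?_, ?_, ?_⟩
  · intro K hK
    exact mem_Kc_smul (hZK K hK) (hcpos K (hZK K hK))
  · intro K L hK hL hU hI
    dsimp only
    rw [nlpSAM_norm hp0 hS (hZK _ hU) hd, nlpSAM_norm hp0 hS (hZK _ hI) hd,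
      nlpSAM_norm hp0 hS (hZK _ hK) hd, nlpSAM_norm hp0 hS (hZK _ hL) hd]
    exact hZ.2 K L hK hL hU hI
  · -- continuity
    intro hcont K hK F hF hdF
    have hd' := hcont K hK F hF hdF
    have hK' : Z K ∈ Kc n := hZK K hK
    have hLi : ∀ i, Z (F i) ∈ Kc n := fun i => hZK _ (hF i)
    have hv := vol_tendsto hK' (fun i => Z (F i)) hLi hd'
    set c0 : ℝ := (volume (Z K)).toReal ^ (-(1/p)) with hc0
    have hVT : (0:ℝ) < (volume (Z K)).toReal :=
      ENNReal.toReal_pos (Kc_vol_pos hK').ne' (Kc_vol_ne_top hK')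
    have hc : Tendsto (fun i => (volume (Z (F i))).toReal ^ (-(1/p))) atTop (𝓝 c0) :=
      ((Real.continuousAt_rpow_const _ _ (Or.inl hVT.ne')).tendsto).comp hv
    obtain ⟨R, hRs⟩ := hK'.1.2.1.isBounded.subset_closedBall 0
    have hR : ∀ x ∈ Z K, ‖x‖ ≤ R := fun x hx => by
      have h1 := hRs hx; rwa [Metric.mem_closedBall, dist_zero_right] at h1
    dsimp only
    apply squeeze_zero (g := fun i => (volume (Z (F i))).toReal ^ (-(1/p)) *
        hausdorffDist (Z (F i)) (Z K) + |(volume (Z (F i))).toReal ^ (-(1/p)) - c0| * R)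
      (fun i => hausdorffDist_nonneg)
    · intro i
      set ci : ℝ := (volume (Z (F i))).toReal ^ (-(1/p)) with hci
      have hcipos : 0 < ci := hcpos _ (hLi i)
      have hc0pos : 0 < c0 := hcpos _ hK'
      have hcompLi : IsCompact (ci • Z (F i)) := (isCB_smul (hLi i).1 hcipos).2.1
      have hcompK1 : IsCompact (ci • Z K) := (isCB_smul hK'.1 hcipos).2.1
      have hneLi : (ci • Z (F i)).Nonempty := (hLi i).1.1.smul_set
      have hneK1 : (ci • Z K).Nonempty := hK'.1.1.smul_set
      calc hausdorffDist (ci • Z (F i)) (c0 • Z K)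
          ≤ hausdorffDist (ci • Z (F i)) (ci • Z K) + hausdorffDist (ci • Z K) (c0 • Z K) :=
            hausdorffDist_triangle (edist_fin hcompLi hcompK1 hneLi hneK1)
        _ ≤ ci * hausdorffDist (Z (F i)) (Z K) + |ci - c0| * R :=
            add_le_add
              (hdist_smul_le (hLi i).1.2.1 hK'.1.2.1 (hLi i).1.1 hK'.1.1 hcipos.le)
              (hdist_smul_pair hR hK'.1.1)
    · have h1 := hc.mul hd'
      rw [mul_zero] at h1
      have h2 := ((hc.sub (tendsto_const_nhds (x := c0))).abs).mul_const R
      rw [sub_self, abs_zero, zero_mul] at h2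
      have h3 := h1.add h2
      rw [add_zero] at h3
      exact h3
  · -- SL covariance
    intro hcov φ K hK
    dsimp only
    have habs : |((φ : Matrix (Fin n) (Fin n) ℝ)).det| = 1 := by
      rw [Matrix.SpecialLinearGroup.det_coe]; exact abs_one
    rw [hcov φ K hK, vol_matAct habs, matAct_smul]
  · -- SL contravariance
    intro hcontra φ K hK
    dsimp only
    have habs : |(((φ : Matrix (Fin n) (Fin n) ℝ)ᵀ)⁻¹).det| = 1 := by
      rw [Matrix.det_nonsing_inv, Matrix.det_transpose, Matrix.SpecialLinearGroup.det_coe]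
      simp
    rw [hcontra φ K hK, vol_matAct habs, matAct_smul]
  · -- homogeneity
    intro q hhom K hK lam hlam
    dsimp only
    rw [hhom K hK lam hlam]
    have hK' : Z K ∈ Kc n := hZK K hK
    have ha : (0:ℝ) < lam ^ q := Real.rpow_pos_of_pos hlam q
    have hT : (0:ℝ) < (volume (Z K)).toReal :=
      ENNReal.toReal_pos (Kc_vol_pos hK').ne' (Kc_vol_ne_top hK')
    rw [vol_smul ha.le, smul_smul, smul_smul]
    congr 1
    rw [ENNReal.toReal_mul, ENNReal.toReal_pow, ENNReal.toReal_ofReal ha.le,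
      Real.mul_rpow (pow_nonneg ha.le n) ENNReal.toReal_nonneg,
      ← Real.rpow_natCast (lam ^ q) n, ← Real.rpow_mul hlam.le, ← Real.rpow_mul hlam.le,
      mul_right_comm, ← Real.rpow_add hlam]
    congr 1
    field_simp
    ring

end
end
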